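/- arXiv:0902.2238 — 3 statements merged into one kernel-verified Lean document; each statement's English description precedes it below -/
import Mathlib

section
/- Let G be a finite group and N a normal subgroup of G such that G/N is cyclic, generated by the coset aN for some a ∈ G. Let π be a set of prime numbers containing every prime divisor of the index [G:N]. Then the number of conjugacy classes of G that consist of π-elements and are contained in the coset aN is equal to the number of conjugacy classes of π-elements of N that are invariant under conjugation by every element of G. -/
/-- A `π`-element: every prime divisor of the order of `g` lies in `π`. -/
def IsPiElement {G : Type*} [Monoid G] (π : Set ℕ) (g : G) : Prop :=
  ∀ p : ℕ, p.Prime → p ∣ orderOf g → p ∈ π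

/-!
Both sides are counted through commuting pairs. For the conjugation action of `N`, Burnside's
lemma equates `|N|` times the number of orbits with the number of fixed pairs. A `G`-class in
`aN` is a single `N`-class, because `G = N⟨g⟩` for every `g ∈ aN`; so `|N|` times the left-hand
side counts the commuting pairs `(g, n) ∈ aN × N` with `g` a `π`-element. The `N`-class of
`x ∈ N` is `G`-invariant iff some `b ∈ aN` centralizes `x`, and then `C_G(x) ∩ aN = b C_N(x)`;
so `|N|` times the right-hand side counts the commuting pairs `(x, b) ∈ N × aN` with `x` a
`π`-element. The two sets of pairs correspond by moving `π`-parts across,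
`(g, n) ↦ (n_π, g n_π')` with inverse `(x, b) ↦ (b_π, x b_π')`; here `b_π ∈ aN` because
`π'`-elements lie in `N` when `[G : N]` is a `π`-number.
-/

/-- `IsPiElement π g` is definitionally `IsPiNumber π (orderOf g)`. -/
def IsPiNumber (π : Set ℕ) (n : ℕ) : Prop :=
  ∀ p : ℕ, p.Prime → p ∣ n → p ∈ π

namespace IsPiNumber

variable {π : Set ℕ} {m n : ℕ}

theorem one : IsPiNumber π 1 := fun _ hp h =>
  absurd (Nat.eq_one_of_dvd_one h ▸ hp) Nat.not_prime_one

theorem prime {p : ℕ} (hp : p.Prime) (h : p ∈ π) : IsPiNumber π p := fun _ hq hqp =>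
  (Nat.prime_dvd_prime_iff_eq hq hp).mp hqp ▸ h

theorem mul (hm : IsPiNumber π m) (hn : IsPiNumber π n) : IsPiNumber π (m * n) := fun p hp h =>
  (hp.dvd_mul.mp h).elim (hm p hp) (hn p hp)

theorem of_dvd (hn : IsPiNumber π n) (hmn : m ∣ n) : IsPiNumber π m := fun p hp h =>
  hn p hp (h.trans hmn)

theorem coprime (hm : IsPiNumber π m) (hn : IsPiNumber πᶜ n) : m.Coprime n :=
  Nat.coprime_of_dvd fun p hp hpm hpn => hn p hp hpn (hm p hp hpm)

end IsPiNumber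

theorem exists_isPiNumber_mul_eq (π : Set ℕ) {n : ℕ} (hn : n ≠ 0) :
    ∃ m₁ m₂, IsPiNumber π m₁ ∧ IsPiNumber πᶜ m₂ ∧ m₁ * m₂ = n := by
  induction n using Nat.recOnMul with
  | zero => exact absurd rfl hn
  | one => exact ⟨1, 1, .one, .one, rfl⟩
  | prime p hp =>
    by_cases h : p ∈ π
    · exact ⟨p, 1, .prime hp h, .one, mul_one p⟩
    · exact ⟨1, p, .one, .prime hp h, one_mul p⟩
  | mul a b iha ihb =>
    obtain ⟨a₁, a₂, ha₁, ha₂, rfl⟩ := iha (left_ne_zero_of_mul hn)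
    obtain ⟨b₁, b₂, hb₁, hb₂, rfl⟩ := ihb (right_ne_zero_of_mul hn)
    exact ⟨a₁ * b₁, a₂ * b₂, ha₁.mul hb₁, ha₂.mul hb₂, by ring⟩

section PiPart

variable {G : Type*} [Group G] {π : Set ℕ}

theorem IsPiElement.conj {g : G} (hg : IsPiElement π g) (c : G) :
    IsPiElement π (c * g * c⁻¹) := by
  rwa [IsPiElement, ← SemiconjBy.orderOf_eq c (x := g) (by simp [SemiconjBy])]

theorem isPiElement_coe_iff {H : Subgroup G} {x : H} :
    IsPiElement π (x : G) ↔ IsPiElement π x := by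
  rw [IsPiElement, IsPiElement, Subgroup.orderOf_coe]

theorem exists_piPart_exponent (π : Set ℕ) (G : Type*) [Group G] [Finite G] :
    ∃ k : ℕ, (∀ g : G, IsPiElement π (g ^ k)) ∧ (∀ g : G, IsPiElement πᶜ (g * (g ^ k)⁻¹)) ∧
      (∀ g : G, IsPiElement π g → g ^ k = g) ∧ ∀ g : G, IsPiElement πᶜ g → g ^ k = 1 := by
  obtain ⟨m₁, m₂, h₁, h₂, hm⟩ := exists_isPiNumber_mul_eq π (Nat.card_pos (α := G)).ne'
  obtain ⟨k, hk₁, hk₂⟩ := Nat.chineseRemainder (h₁.coprime h₂) 1 0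
  have hk₂ : m₂ ∣ k := Nat.modEq_zero_iff_dvd.mp hk₂
  have hexp (g : G) : orderOf g ∣ m₁ * m₂ := hm ▸ orderOf_dvd_natCard g
  refine ⟨k, fun g => h₁.of_dvd (orderOf_dvd_of_pow_eq_one ?_),
    fun g => h₂.of_dvd (orderOf_dvd_of_pow_eq_one ?_), fun g hg => ?_, fun g hg => ?_⟩
  · rw [← pow_mul, ← orderOf_dvd_iff_pow_eq_one, mul_comm k]
    exact (hexp g).trans (Nat.mul_dvd_mul_left m₁ hk₂)
  · rw [((Commute.refl g).pow_right k).inv_right.mul_pow, inv_pow, ← pow_mul, mul_inv_eq_one,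
      pow_eq_pow_iff_modEq]
    exact (by simpa using hk₁.mul_right' m₂ : k * m₂ ≡ m₂ [MOD m₁ * m₂]).of_dvd (hexp g) |>.symm
  · have : orderOf g ∣ m₁ := (IsPiNumber.coprime hg h₂).dvd_of_dvd_mul_right (hexp g)
    conv_rhs => rw [← pow_one g]
    exact pow_eq_pow_iff_modEq.mpr (hk₁.of_dvd this)
  · have : orderOf g ∣ m₂ :=
      (IsPiNumber.coprime hg (by rwa [compl_compl])).dvd_of_dvd_mul_left (hexp g)
    exact orderOf_dvd_iff_pow_eq_one.mp (this.trans hk₂)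

variable [Finite G]

noncomputable def piPart (π : Set ℕ) (g : G) : G := g ^ (exists_piPart_exponent π G).choose

variable {g x : G}

theorem isPiElement_piPart (π : Set ℕ) (g : G) : IsPiElement π (piPart π g) :=
  (exists_piPart_exponent π G).choose_spec.1 g

theorem isPiElement_compl_mul_inv_piPart (π : Set ℕ) (g : G) :
    IsPiElement πᶜ (g * (piPart π g)⁻¹) :=
  (exists_piPart_exponent π G).choose_spec.2.1 g

theorem piPart_eq_self (hg : IsPiElement π g) : piPart π g = g :=
  (exists_piPart_exponent π G).choose_spec.2.2.1 g hg

theorem piPart_eq_one (hg : IsPiElement πᶜ g) : piPart π g = 1 :=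
  (exists_piPart_exponent π G).choose_spec.2.2.2 g hg

theorem piPart_compl_eq_one (hg : IsPiElement π g) : piPart πᶜ g = 1 :=
  piPart_eq_one (by rwa [compl_compl])

theorem piPart_mem {H : Subgroup G} (hg : g ∈ H) : piPart π g ∈ H := H.pow_mem hg _

theorem Commute.piPart_left (h : Commute g x) : Commute (piPart π g) x := h.pow_left _

theorem Commute.piPart_right (h : Commute g x) : Commute g (piPart π x) := h.pow_right _

theorem Commute.piPart_mul (h : Commute g x) : piPart π (g * x) = piPart π g * piPart π x :=
  h.mul_pow _

theorem Commute.piPart_mul_eq_left (h : Commute g x) (hg : IsPiElement π g)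
    (hx : IsPiElement πᶜ x) : piPart π (g * x) = g := by
  rw [h.piPart_mul, piPart_eq_self hg, piPart_eq_one hx, mul_one]

theorem Commute.piPart_compl_mul_eq_right (h : Commute g x) (hg : IsPiElement π g)
    (hx : IsPiElement πᶜ x) : piPart πᶜ (g * x) = x := by
  rw [h.piPart_mul, piPart_compl_eq_one hg, piPart_eq_self hx, one_mul]

theorem piPart_mul_piPart_compl (π : Set ℕ) (g : G) : piPart π g * piPart πᶜ g = g := by
  have hcomm : Commute (g * (piPart π g)⁻¹) (piPart π g) :=
    (Commute.refl g).piPart_right.mul_left (Commute.refl _).inv_left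
  have hcompl := hcomm.piPart_mul_eq_left (isPiElement_compl_mul_inv_piPart π g)
    (by rw [compl_compl]; exact isPiElement_piPart π g)
  rw [inv_mul_cancel_right] at hcompl
  rw [hcompl, ← mul_assoc]
  exact (Commute.refl g).piPart_left.mul_inv_cancel

end PiPart

theorem Subgroup.mem_of_isPiElement_compl {G : Type*} [Group G] {π : Set ℕ} {N : Subgroup G}
    [N.Normal] (hN : IsPiNumber π N.index) {t : G} (ht : IsPiElement πᶜ t) : t ∈ N := by
  rw [← QuotientGroup.eq_one_iff, ← orderOf_eq_one_iff]
  exact Nat.eq_one_of_dvd_coprimes (hN.coprime ht)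
    (N.index_eq_card ▸ _root_.orderOf_dvd_natCard _) (orderOf_map_dvd (QuotientGroup.mk' N) t)

theorem Nat.card_subtype_prod_congr_right {α β γ : Type*} [Finite β] [Finite γ]
    (R : α → β → Prop) (S : α → γ → Prop)
    (h : ∀ a, Nat.card {b // R a b} = Nat.card {c // S a c}) :
    Nat.card {p : α × β // R p.1 p.2} = Nat.card {p : α × γ // S p.1 p.2} :=
  Nat.card_congr <| (Equiv.subtypeProdEquivSigmaSubtype R).trans <|
    (Equiv.sigmaCongrRight fun a => (Finite.card_eq.mp (h a)).some).trans
      (Equiv.subtypeProdEquivSigmaSubtype S).symm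

/-- Burnside's lemma for `H` acting through `φ` by conjugation on the classes satisfying `P`,
each of which is a single `H`-orbit by `hφ`. -/
theorem card_commute_eq_card_conjClasses_mul_card_of_forall_isConj {G H : Type*} [Group G]
    [Group H] (φ : H →* G) (P : ConjClasses G → Prop)
    (hφ : ∀ g g' : G, P (ConjClasses.mk g) → IsConj g g' → ∃ h : H, φ h * g * (φ h)⁻¹ = g') :
    Nat.card {p : G × H // P (ConjClasses.mk p.1) ∧ Commute p.1 (φ p.2)} =
      Nat.card {c // P c} * Nat.card H := by
  let S := {g : G // P (ConjClasses.mk g)}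
  have hS (h : H) (g : S) : P (ConjClasses.mk (φ h * g * (φ h)⁻¹)) := by
    rw [ConjClasses.mk_eq_mk_iff_isConj.mpr (isConj_iff.mpr ⟨φ h, rfl⟩).symm]
    exact g.2
  let _ : MulAction H S :=
    { smul h g := ⟨φ h * g * (φ h)⁻¹, hS h g⟩
      one_smul g := Subtype.ext (show φ 1 * g * (φ 1)⁻¹ = g by simp)
      mul_smul h h' g := Subtype.ext (show φ (h * h') * g * (φ (h * h'))⁻¹ =
        φ h * (φ h' * g * (φ h')⁻¹) * (φ h)⁻¹ by simp [mul_assoc]) }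
  have hsmul (h : H) (g : S) : ((h • g : S) : G) = φ h * g * (φ h)⁻¹ := rfl
  have horbits : {c // P c} ≃ MulAction.orbitRel.Quotient H S :=
    Equiv.subtypeQuotientEquivQuotientSubtype _ P (fun _ => Iff.rfl) fun g g' => by
      simp only [MulAction.orbitRel_apply, MulAction.mem_orbit_iff, Subtype.ext_iff, hsmul]
      exact ⟨fun ⟨h, hh⟩ => (isConj_iff.mpr ⟨φ h, hh⟩).symm, fun hc => hφ g' g g'.2 hc.symm⟩
  have hfixed : {p : G × H // P (ConjClasses.mk p.1) ∧ Commute p.1 (φ p.2)} ≃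
      {p : H × S // p.1 • p.2 = p.2} :=
    { toFun p := ⟨(p.1.2, ⟨p.1.1, p.2.1⟩), Subtype.ext p.2.2.symm.mul_inv_cancel⟩
      invFun q := ⟨(q.1.2, q.1.1), q.1.2.2,
        (mul_inv_eq_iff_eq_mul.mp (congrArg Subtype.val q.2) : Commute _ _).symm⟩
      left_inv _ := rfl
      right_inv _ := rfl }
  rw [Nat.card_congr hfixed, Nat.card_congr horbits, ← Nat.card_prod]
  exact Nat.card_congr ((Equiv.subtypeProdEquivSigmaSubtype _).trans
    (MulAction.sigmaFixedByEquivOrbitsProdGroup H S))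

theorem ConjClasses.forall_mem_carrier_mk_iff {G : Type*} [Group G] {Q : G → Prop}
    (hQ : ∀ g c : G, Q g → Q (c * g * c⁻¹)) (g : G) :
    (∀ x ∈ (ConjClasses.mk g).carrier, Q x) ↔ Q g := by
  refine ⟨fun h => h g (ConjClasses.mem_carrier_mk), fun hg x hx => ?_⟩
  rw [ConjClasses.mem_carrier_iff_mk_eq, ConjClasses.mk_eq_mk_iff_isConj] at hx
  obtain ⟨c, rfl⟩ := isConj_iff.mp hx.symm
  exact hQ g c hg

section CyclicQuotient

variable {G : Type*} [Group G] {N : Subgroup G} [N.Normal] {a : G}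

theorem exists_mem_conj_eq_of_commute
    (hgen : ∀ y : G ⧸ N, y ∈ Subgroup.zpowers (a : G ⧸ N)) {b x : G} (hb : a⁻¹ * b ∈ N)
    (hbx : Commute b x) (c : G) : ∃ ν ∈ N, c * x * c⁻¹ = ν * x * ν⁻¹ := by
  obtain ⟨j, hj⟩ := Subgroup.mem_zpowers_iff.mp (hgen c)
  refine ⟨c * (b ^ j)⁻¹, ?_, ?_⟩
  · rw [← QuotientGroup.eq_one_iff, QuotientGroup.mk_mul, QuotientGroup.mk_inv,
      QuotientGroup.mk_zpow, ← QuotientGroup.eq.mpr hb, hj, mul_inv_cancel]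
  · calc c * x * c⁻¹ = c * (b ^ j)⁻¹ * (b ^ j * x * (b ^ j)⁻¹) * (c * (b ^ j)⁻¹)⁻¹ := by group
      _ = _ := by rw [(hbx.zpow_left j).mul_inv_cancel]

theorem inv_mul_conj_mem_of_mem (hgen : ∀ y : G ⧸ N, y ∈ Subgroup.zpowers (a : G ⧸ N))
    {g : G} (hg : a⁻¹ * g ∈ N) (c : G) : a⁻¹ * (c * g * c⁻¹) ∈ N := by
  obtain ⟨ν, hν, hc⟩ := exists_mem_conj_eq_of_commute hgen hg (Commute.refl g) c
  rw [hc, ← QuotientGroup.eq] at *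
  simp [(QuotientGroup.eq_one_iff ν).mpr hν, hg]

theorem conjClasses_mk_invariant_iff (hgen : ∀ y : G ⧸ N, y ∈ Subgroup.zpowers (a : G ⧸ N))
    (x : N) :
    (∀ g : G, ∀ x' : N, x' ∈ (ConjClasses.mk x).carrier →
        ∀ y : N, (y : G) = g * (x' : G) * g⁻¹ → y ∈ (ConjClasses.mk x).carrier) ↔
      ∃ b : G, a⁻¹ * b ∈ N ∧ Commute b x := by
  simp only [ConjClasses.mem_carrier_iff_mk_eq, ConjClasses.mk_eq_mk_iff_isConj]
  constructor
  · intro h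
    obtain ⟨μ, hμ⟩ := isConj_iff.mp (h a x (IsConj.refl x) ⟨_, ‹N.Normal›.conj_mem x x.2 a⟩ rfl)
    have hμ : (μ * a : G) * x * (μ * a)⁻¹ = x := by
      simpa [mul_assoc] using congrArg Subtype.val hμ
    refine ⟨μ * a, ?_, mul_inv_eq_iff_eq_mul.mp hμ⟩
    simpa [mul_assoc] using ‹N.Normal›.conj_mem μ μ.2 a⁻¹
  · rintro ⟨b, hb, hbx⟩ g x' hx' y hy
    obtain ⟨c, rfl⟩ := isConj_iff.mp hx'.symm
    obtain ⟨ν, hν, hgc⟩ := exists_mem_conj_eq_of_commute hgen hb hbx (g * c)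
    refine (isConj_iff.mpr ⟨⟨ν, hν⟩, Subtype.ext ?_⟩).symm
    rw [hy, Subgroup.coe_mul, Subgroup.coe_mul, Subgroup.coe_mul, Subgroup.coe_mul,
      Subgroup.coe_inv, Subgroup.coe_inv, ← hgc]
    group

variable (π : Set ℕ)

theorem card_conjClasses_coset_mul_card
    (hgen : ∀ y : G ⧸ N, y ∈ Subgroup.zpowers (a : G ⧸ N)) :
    Nat.card {c : ConjClasses G //
        (∀ g ∈ c.carrier, IsPiElement π g) ∧ c.carrier ⊆ {g : G | a⁻¹ * g ∈ N}} * Nat.card N =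
      Nat.card {p : G × N // (IsPiElement π p.1 ∧ a⁻¹ * p.1 ∈ N) ∧ Commute p.1 (p.2 : G)} := by
  have hP (g : G) : ((∀ x ∈ (ConjClasses.mk g).carrier, IsPiElement π x) ∧
      (ConjClasses.mk g).carrier ⊆ {g : G | a⁻¹ * g ∈ N}) ↔ IsPiElement π g ∧ a⁻¹ * g ∈ N :=
    and_congr (ConjClasses.forall_mem_carrier_mk_iff (fun g c hg => hg.conj c) g)
      (ConjClasses.forall_mem_carrier_mk_iff (fun g c hg => inv_mul_conj_mem_of_mem hgen hg c) g)
  rw [← card_commute_eq_card_conjClasses_mul_card_of_forall_isConj N.subtype _ ?_]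
  · exact Nat.card_congr (Equiv.subtypeEquivRight fun p => and_congr_left' (hP p.1))
  · intro g g' hg hgg'
    obtain ⟨c, rfl⟩ := isConj_iff.mp hgg'
    obtain ⟨ν, hν, hc⟩ := exists_mem_conj_eq_of_commute hgen ((hP g).mp hg).2 (Commute.refl g) c
    exact ⟨⟨ν, hν⟩, hc.symm⟩

theorem card_invariant_conjClasses_mul_card
    (hgen : ∀ y : G ⧸ N, y ∈ Subgroup.zpowers (a : G ⧸ N)) :
    Nat.card {c : ConjClasses N // (∀ x ∈ c.carrier, IsPiElement π x) ∧
        ∀ g : G, ∀ x : N, x ∈ c.carrier →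
          ∀ y : N, (y : G) = g * (x : G) * g⁻¹ → y ∈ c.carrier} * Nat.card N =
      Nat.card {p : N × N //
        (IsPiElement π (p.1 : G) ∧ ∃ b : G, a⁻¹ * b ∈ N ∧ Commute b p.1) ∧ Commute p.1 p.2} := by
  rw [← card_commute_eq_card_conjClasses_mul_card_of_forall_isConj (MonoidHom.id N) _
    fun _ _ _ h => isConj_iff.mp h]
  refine Nat.card_congr (Equiv.subtypeEquivRight fun p => and_congr_left' (and_congr ?_
    (conjClasses_mk_invariant_iff hgen p.1)))
  exact (ConjClasses.forall_mem_carrier_mk_iff (fun g c hg => hg.conj c) p.1).trans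
    isPiElement_coe_iff.symm

end CyclicQuotient

theorem card_coset_commute_eq_card_commute {G : Type*} [Group G] {N : Subgroup G}
    {a x b₀ : G} (hb₀ : a⁻¹ * b₀ ∈ N) (hx : Commute x b₀) :
    Nat.card {b : G // a⁻¹ * b ∈ N ∧ Commute x b} = Nat.card {m : N // Commute x m} :=
  Nat.card_congr
    { toFun b := ⟨⟨b₀⁻¹ * b, by simpa [mul_assoc] using mul_mem (inv_mem hb₀) b.2.1⟩,
        hx.inv_right.mul_right b.2.2⟩
      invFun m := ⟨b₀ * m, by rw [← mul_assoc]; exact mul_mem hb₀ m.1.2, hx.mul_right m.2⟩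
      left_inv b := Subtype.ext (mul_inv_cancel_left _ _)
      right_inv m := Subtype.ext (Subtype.ext (inv_mul_cancel_left _ _)) }

section Swap

variable {G : Type*} [Group G] [Finite G] {π : Set ℕ} {N : Subgroup G} [N.Normal]

theorem card_commute_piElement_coset_swap (hN : IsPiNumber π N.index) (a : G) :
    Nat.card {p : G × N // (IsPiElement π p.1 ∧ a⁻¹ * p.1 ∈ N) ∧ Commute p.1 (p.2 : G)} =
      Nat.card {p : N × G // (IsPiElement π (p.1 : G) ∧ a⁻¹ * p.2 ∈ N) ∧ Commute (p.1 : G) p.2} :=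
  have hcompl (b : G) : piPart πᶜ b ∈ N := N.mem_of_isPiElement_compl hN (isPiElement_piPart πᶜ b)
  Nat.card_congr
    { toFun p := ⟨(⟨piPart π (p.1.2 : G), piPart_mem p.1.2.2⟩, p.1.1 * piPart πᶜ (p.1.2 : G)),
        ⟨isPiElement_piPart π _, by rw [← mul_assoc]; exact mul_mem p.2.1.2 (piPart_mem p.1.2.2)⟩,
        p.2.2.symm.piPart_left.mul_right (Commute.refl _).piPart_left.piPart_right⟩
      invFun q := ⟨(piPart π q.1.2, ⟨q.1.1 * piPart πᶜ q.1.2, mul_mem q.1.1.2 (hcompl _)⟩),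
        ⟨isPiElement_piPart π _, by
          rw [eq_mul_inv_of_mul_eq (piPart_mul_piPart_compl π q.1.2), ← mul_assoc]
          exact mul_mem q.2.1.2 (inv_mem (hcompl _))⟩,
        q.2.2.piPart_right.symm.mul_right (Commute.refl _).piPart_left.piPart_right⟩
      left_inv := by
        rintro ⟨⟨g, n⟩, ⟨hg, -⟩, hgn⟩
        have hgn' : Commute g (piPart πᶜ (n : G)) := hgn.piPart_right
        refine Subtype.ext (Prod.ext (hgn'.piPart_mul_eq_left hg (isPiElement_piPart πᶜ _)) ?_)
        refine Subtype.ext ?_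
        show piPart π (n : G) * piPart πᶜ (g * piPart πᶜ (n : G)) = n
        rw [hgn'.piPart_compl_mul_eq_right hg (isPiElement_piPart πᶜ _), piPart_mul_piPart_compl]
      right_inv := by
        rintro ⟨⟨x, b⟩, ⟨hx, -⟩, hxb⟩
        have hxb' : Commute (x : G) (piPart πᶜ b) := hxb.piPart_right
        refine Subtype.ext (Prod.ext (Subtype.ext ?_) ?_)
        · exact hxb'.piPart_mul_eq_left hx (isPiElement_piPart πᶜ _)
        · show piPart π b * piPart πᶜ (x * piPart πᶜ b) = b
          rw [hxb'.piPart_compl_mul_eq_right hx (isPiElement_piPart πᶜ _),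
            piPart_mul_piPart_compl] }

end Swap

theorem card_commute_piElement_coset_eq_card_commute_invariant {G : Type*} [Group G] [Finite G]
    (π : Set ℕ) (N : Subgroup G) (a : G) :
    Nat.card {p : N × G // (IsPiElement π (p.1 : G) ∧ a⁻¹ * p.2 ∈ N) ∧ Commute (p.1 : G) p.2} =
      Nat.card {p : N × N //
        (IsPiElement π (p.1 : G) ∧ ∃ b : G, a⁻¹ * b ∈ N ∧ Commute b p.1) ∧ Commute p.1 p.2} := by
  refine Nat.card_subtype_prod_congr_right
    (fun (x : N) (b : G) => (IsPiElement π (x : G) ∧ a⁻¹ * b ∈ N) ∧ Commute (x : G) b)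
    (fun (x m : N) => (IsPiElement π (x : G) ∧ ∃ b : G, a⁻¹ * b ∈ N ∧ Commute b x) ∧ Commute x m)
    fun x => ?_
  by_cases hx : IsPiElement π (x : G) ∧ ∃ b : G, a⁻¹ * b ∈ N ∧ Commute b x
  · obtain ⟨hπx, b₀, hb₀, hc⟩ := hx
    calc _ = Nat.card {b : G // a⁻¹ * b ∈ N ∧ Commute (x : G) b} :=
          Nat.card_congr (Equiv.subtypeEquivRight fun b => by rw [and_assoc, and_iff_right hπx])
      _ = Nat.card {m : N // Commute (x : G) m} := card_coset_commute_eq_card_commute hb₀ hc.symm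
      _ = _ := Nat.card_congr (Equiv.subtypeEquivRight fun m => by
          rw [Submonoid.commute_coe_coe, and_iff_right ⟨hπx, b₀, hb₀, hc⟩])
  · have : IsEmpty {b : G // (IsPiElement π (x : G) ∧ a⁻¹ * b ∈ N) ∧ Commute (x : G) b} :=
      ⟨fun b => hx ⟨b.2.1.1, b.1, b.2.1.2, b.2.2.symm⟩⟩
    have : IsEmpty {m : N //
        (IsPiElement π (x : G) ∧ ∃ b : G, a⁻¹ * b ∈ N ∧ Commute b x) ∧ Commute x m} :=
      ⟨fun m => hx m.2.1⟩
    exact Nat.card_congr (Equiv.equivOfIsEmpty _ _)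

/-- Lemma 2.2(2): if `G/N` is cyclic generated by `aN` and `π` contains all prime
divisors of `[G:N]`, then the number of conjugacy classes of `π`-elements of `G`
contained in the coset `aN` equals the number of `G`-invariant conjugacy classes of
`π`-elements of `N`. -/
theorem stmt_0 {G : Type*} [Group G] [Finite G] (N : Subgroup G) [N.Normal]
    (π : Set ℕ) (a : G)
    (hgen : ∀ x : G ⧸ N, x ∈ Subgroup.zpowers (QuotientGroup.mk a : G ⧸ N))
    (hπ : ∀ p : ℕ, p.Prime → p ∣ N.index → p ∈ π) :
    Nat.card {c : ConjClasses G //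
        (∀ g ∈ c.carrier, IsPiElement π g) ∧ c.carrier ⊆ {g : G | a⁻¹ * g ∈ N}} =
    Nat.card {c : ConjClasses N //
        (∀ x ∈ c.carrier, IsPiElement π x) ∧
        ∀ g : G, ∀ x : N, x ∈ c.carrier →
          ∀ y : N, (y : G) = g * (x : G) * g⁻¹ → y ∈ c.carrier} := by
  refine Nat.eq_of_mul_eq_mul_right (Nat.card_pos (α := ↥N)) ?_
  rw [card_conjClasses_coset_mul_card π hgen, card_invariant_conjClasses_mul_card π hgen,
    card_commute_piElement_coset_swap hπ a, card_commute_piElement_coset_eq_card_commute_invariant]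
end

section
/- For every natural number m with m ≥ 4, the number of conjugacy classes of the alternating group A_m is strictly less than the number of conjugacy classes of the symmetric group S_m. -/
/-!
Conjugacy classes of `S_n` correspond to partitions of `n` (cycle types, with fixed points as
parts `1`), and a permutation whose partition has `ℓ` parts has sign `(-1) ^ (n + ℓ)`. Since `A_n` has index
two, an `S_n`-class of even permutations is the union of at most two `A_n`-classes, and of only one
when some odd permutation centralizes its elements, which happens unless `p` has distinct odd
parts. Hence `k(A_n) ≤ e + d`, where `e` and `o` count the partitions of even and odd sign and `d`
those with distinct odd parts. Splitting a part `c ≥ 3` of such a partition into `c - 1` and `1`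
injects them into the odd ones, missing every odd partition without a part `1`; so `d < o` and
`k(A_n) < e + o = k(S_n)`.
-/

open Finset

namespace Subgroup

variable {G : Type*} [Group G] {H : Subgroup G}

theorem isConj_of_conj_eq {x y : H} {g : G} (hg : g ∈ H) (h : g * x * g⁻¹ = y) : IsConj x y :=
  isConj_iff.mpr ⟨⟨g, hg⟩, Subtype.ext h⟩

theorem isConj_of_isConj_coe_of_not_centralizer_le (hH : H.index = 2) {x y : H}
    (hxy : IsConj (x : G) y) (hx : ¬ centralizer {(x : G)} ≤ H) : IsConj x y := by
  obtain ⟨g, hg⟩ := isConj_iff.mp hxy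
  obtain ⟨z, hz, hzH⟩ := SetLike.not_le_iff_exists.mp hx
  by_cases hgH : g ∈ H
  · exact isConj_of_conj_eq hgH hg
  refine isConj_of_conj_eq ((mul_mem_iff_of_index_two hH).mpr (iff_of_false hgH hzH)) ?_
  rw [mem_centralizer_singleton_iff] at hz
  calc g * z * x * (g * z)⁻¹ = g * (z * x * z⁻¹) * g⁻¹ := by group
    _ = y := by rw [hz, mul_inv_cancel_right, hg]

theorem isConj_or_isConj_or_isConj_of_index_two (hH : H.index = 2) {x y z : H}
    (hxy : IsConj (x : G) y) (hyz : IsConj (y : G) z) :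
    IsConj x y ∨ IsConj y z ∨ IsConj x z := by
  obtain ⟨g, hg⟩ := isConj_iff.mp hxy
  obtain ⟨h, hh⟩ := isConj_iff.mp hyz
  by_cases hgH : g ∈ H
  · exact .inl (isConj_of_conj_eq hgH hg)
  by_cases hhH : h ∈ H
  · exact .inr (.inl (isConj_of_conj_eq hhH hh))
  refine .inr (.inr (isConj_of_conj_eq ((mul_mem_iff_of_index_two hH).mpr
    (iff_of_false hhH hgH)) ?_))
  rw [← hh, ← hg]
  group

theorem card_le_two_of_forall_isConj (hH : H.index = 2) {S : Finset (ConjClasses H)}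
    (hS : ∀ x y : H, ConjClasses.mk x ∈ S → ConjClasses.mk y ∈ S → IsConj (x : G) y) :
    #S ≤ 2 := by
  by_contra! hcard
  obtain ⟨a, ha, b, hb, c, hc, hab, hac, hbc⟩ := two_lt_card.mp hcard
  obtain ⟨x, rfl⟩ := ConjClasses.mk_surjective a
  obtain ⟨y, rfl⟩ := ConjClasses.mk_surjective b
  obtain ⟨z, rfl⟩ := ConjClasses.mk_surjective c
  simp only [ne_eq, ConjClasses.mk_eq_mk_iff_isConj] at hab hac hbc
  rcases isConj_or_isConj_or_isConj_of_index_two hH (hS x y ha hb) (hS y z hb hc) with h | h | h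
  exacts [hab h, hbc h, hac h]

theorem card_le_one_of_forall_isConj (hH : H.index = 2) {S : Finset (ConjClasses H)}
    (hS : ∀ x y : H, ConjClasses.mk x ∈ S → ConjClasses.mk y ∈ S → IsConj (x : G) y)
    (hC : ∀ x : H, ConjClasses.mk x ∈ S → ¬ centralizer {(x : G)} ≤ H) : #S ≤ 1 :=
  card_le_one.mpr fun a ha b hb => by
    obtain ⟨x, rfl⟩ := ConjClasses.mk_surjective a
    obtain ⟨y, rfl⟩ := ConjClasses.mk_surjective b
    exact ConjClasses.mk_eq_mk_iff_isConj.mpr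
      (isConj_of_isConj_coe_of_not_centralizer_le hH (hS x y ha hb) (hC x ha))

end Subgroup

namespace Nat.Partition

variable {n : ℕ}

theorem parts_eq_filter_add_replicate (p : n.Partition) :
    p.parts = p.parts.filter (2 ≤ ·) +
      Multiset.replicate (n - (p.parts.filter (2 ≤ ·)).sum) 1 := by
  have hones : p.parts.filter (¬ 2 ≤ ·) =
      Multiset.replicate (Multiset.card (p.parts.filter (¬ 2 ≤ ·))) 1 :=
    Multiset.eq_replicate_card.mpr fun a ha => by
      have := p.parts_pos (Multiset.mem_of_mem_filter ha)
      have := (Multiset.mem_filter.mp ha).2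
      omega
  have hsum := p.parts_sum
  rw [← Multiset.filter_add_not (2 ≤ ·) p.parts, Multiset.sum_add, hones,
    Multiset.sum_replicate, smul_eq_mul, mul_one] at hsum
  conv_lhs => rw [← Multiset.filter_add_not (2 ≤ ·) p.parts, hones]
  congr 2
  omega

theorem mem_oddDistincts_iff {p : n.Partition} :
    p ∈ oddDistincts n ↔ (∀ i ∈ p.parts, Odd i) ∧ p.parts.Nodup := by
  simp [oddDistincts, odds, restricted, distincts]

theorem even_add_card_parts (p : n.Partition) (hp : ∀ i ∈ p.parts, Odd i) :
    Even (n + Multiset.card p.parts) := by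
  suffices ∀ s : Multiset ℕ, (∀ i ∈ s, Odd i) → Even (s.sum + Multiset.card s) by
    simpa [p.parts_sum] using this p.parts hp
  intro s
  induction s using Multiset.induction_on with
  | empty => simp
  | cons a s ih =>
    intro hs
    obtain ⟨k, hk⟩ := hs a (Multiset.mem_cons_self a s)
    obtain ⟨j, hj⟩ := ih fun i hi => hs i (Multiset.mem_cons_of_mem hi)
    exact ⟨k + j + 1, by rw [Multiset.sum_cons, Multiset.card_cons]; omega⟩

def splitOffOne (p : n.Partition) {c : ℕ} (hc : c ∈ p.parts) (h2 : 2 ≤ c) : n.Partition where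
  parts := (c - 1) ::ₘ 1 ::ₘ p.parts.erase c
  parts_pos {i} hi := by
    rcases Multiset.mem_cons.mp hi with rfl | hi
    · omega
    rcases Multiset.mem_cons.mp hi with rfl | hi
    · exact one_pos
    · exact p.parts_pos (Multiset.mem_of_mem_erase hi)
  parts_sum := by
    have h := congrArg Multiset.sum (Multiset.cons_erase hc)
    rw [Multiset.sum_cons, p.parts_sum] at h
    rw [Multiset.sum_cons, Multiset.sum_cons]
    omega

variable {p q : n.Partition} {c d : ℕ} {hc : c ∈ p.parts} {h2 : 2 ≤ c}

theorem card_parts_splitOffOne :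
    Multiset.card (p.splitOffOne hc h2).parts = Multiset.card p.parts + 1 := by
  simp only [splitOffOne, Multiset.card_cons, Multiset.card_erase_add_one hc]

theorem one_mem_parts_splitOffOne : 1 ∈ (p.splitOffOne hc h2).parts := by
  simp [splitOffOne]

theorem eq_of_splitOffOne_eq (hp : ∀ i ∈ p.parts, Odd i) (hq : ∀ i ∈ q.parts, Odd i)
    {hd : d ∈ q.parts} {hd2 : 2 ≤ d} (h : p.splitOffOne hc h2 = q.splitOffOne hd hd2) :
    p = q := by
  have hparts : (c - 1) ::ₘ 1 ::ₘ p.parts.erase c = (d - 1) ::ₘ 1 ::ₘ q.parts.erase d :=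
    congrArg parts h
  -- `c - 1` is the only even part on either side
  have hcd : c = d := by
    have hmem : c - 1 ∈ (d - 1) ::ₘ 1 ::ₘ q.parts.erase d :=
      hparts ▸ Multiset.mem_cons_self _ _
    obtain ⟨k, rfl⟩ := hp c hc
    obtain ⟨l, rfl⟩ := hq d hd
    rcases Multiset.mem_cons.mp hmem with heq | hmem
    · omega
    rcases Multiset.mem_cons.mp hmem with heq | hmem
    · omega
    · obtain ⟨j, hj⟩ := hq _ (Multiset.mem_of_mem_erase hmem)
      omega
  subst hcd
  rw [Multiset.cons_inj_right, Multiset.cons_inj_right] at hparts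
  ext1
  rw [← Multiset.cons_erase hc, ← Multiset.cons_erase hd, hparts]

theorem exists_three_le_of_mem_oddDistincts (hn : 2 ≤ n) (hp : p ∈ oddDistincts n) :
    ∃ c ∈ p.parts, 3 ≤ c := by
  rw [mem_oddDistincts_iff] at hp
  by_contra! hsmall
  have hones : p.parts = Multiset.replicate (Multiset.card p.parts) 1 :=
    Multiset.eq_replicate_card.mpr fun i hi => by
      obtain ⟨k, rfl⟩ := hp.1 i hi
      have := hsmall _ hi
      omega
  have hcard : Multiset.card p.parts ≤ 1 := by
    have := Multiset.nodup_iff_count_le_one.mp hp.2 1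
    rwa [hones, Multiset.count_replicate_self] at this
  have := p.parts_sum
  rw [hones, Multiset.sum_replicate, smul_eq_mul, mul_one] at this
  omega

theorem exists_odd_add_card_parts_and_one_notMem (hn : 4 ≤ n) :
    ∃ q : n.Partition, Odd (n + Multiset.card q.parts) ∧ 1 ∉ q.parts := by
  rcases Nat.even_or_odd n with hn' | hn'
  · refine ⟨indiscrete n, ?_, ?_⟩ <;> simp only [indiscrete_parts (show n ≠ 0 by omega),
      Multiset.card_singleton, Multiset.mem_singleton]
    exacts [hn'.add_one, by omega]
  · refine ⟨ofSums n {n - 2, 2} (by simp; omega), ?_, ?_⟩ <;>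
      simp [show n - 2 ≠ 0 by omega]
    exacts [hn'.add_even even_two, by omega]

theorem card_oddDistincts_lt (hn : 4 ≤ n) :
    #(oddDistincts n) < #{p : n.Partition | Odd (n + Multiset.card p.parts)} := by
  choose c hc h3 using fun p (hp : p ∈ oddDistincts n) =>
    exists_three_le_of_mem_oddDistincts (by omega) hp
  let f (p : oddDistincts n) : {q : n.Partition // Odd (n + Multiset.card q.parts)} :=
    ⟨p.1.splitOffOne (hc p.1 p.2) (by linarith [h3 p.1 p.2]), by
      rw [card_parts_splitOffOne, ← add_assoc]
      exact (even_add_card_parts _ (mem_oddDistincts_iff.mp p.2).1).add_one⟩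
  have hf_inj : Function.Injective f := fun p q h => Subtype.ext <|
    eq_of_splitOffOne_eq (mem_oddDistincts_iff.mp p.2).1 (mem_oddDistincts_iff.mp q.2).1
      (Subtype.mk.inj h)
  have hf_not_surj : ¬ Function.Surjective f := by
    obtain ⟨q, hq, h1⟩ := exists_odd_add_card_parts_and_one_notMem hn
    intro hf
    obtain ⟨p, hp⟩ := hf ⟨q, hq⟩
    exact h1 (Subtype.mk.inj hp ▸ one_mem_parts_splitOffOne)
  simpa [Fintype.card_subtype] using
    Fintype.card_lt_of_injective_not_surjective f hf_inj hf_not_surj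

end Nat.Partition

namespace Equiv.Perm

variable {α : Type*} [Fintype α] [DecidableEq α]

theorem partition_surjective : Function.Surjective (partition : Perm α → _) := by
  intro p
  have hsum : (p.parts.filter (2 ≤ ·)).sum ≤ Fintype.card α := by
    conv_rhs => rw [← p.parts_sum, ← Multiset.filter_add_not (2 ≤ ·) p.parts]
    rw [Multiset.sum_add]
    exact Nat.le_add_right _ _
  obtain ⟨σ, hσ⟩ := (exists_with_cycleType_iff α).mpr
    ⟨hsum, fun a ha => (Multiset.mem_filter.mp ha).2⟩
  refine ⟨σ, Nat.Partition.ext ?_⟩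
  rw [σ.partition.parts_eq_filter_add_replicate, p.parts_eq_filter_add_replicate,
    filter_parts_partition_eq_cycleType, hσ]

def partitionOfConjClass : ConjClasses (Perm α) → (Fintype.card α).Partition :=
  Quotient.lift partition fun _ _ => partition_eq_of_isConj.mp

theorem partitionOfConjClass_bijective :
    Function.Bijective (partitionOfConjClass (α := α)) := by
  refine ⟨fun c d h => ?_, fun p => ?_⟩
  · obtain ⟨σ, rfl⟩ := ConjClasses.mk_surjective c
    obtain ⟨τ, rfl⟩ := ConjClasses.mk_surjective d
    exact ConjClasses.mk_eq_mk_iff_isConj.mpr (partition_eq_of_isConj.mpr h)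
  · obtain ⟨σ, rfl⟩ := partition_surjective p
    exact ⟨ConjClasses.mk σ, rfl⟩

theorem nat_card_conjClasses_eq_card_partition :
    Nat.card (ConjClasses (Perm α)) = Fintype.card (Fintype.card α).Partition := by
  rw [Nat.card_eq_of_bijective _ partitionOfConjClass_bijective, Nat.card_eq_fintype_card]

theorem sign_eq_neg_one_pow_partition (σ : Perm α) :
    sign σ = (-1) ^ (Fintype.card α + Multiset.card σ.partition.parts) := by
  have hsupp : #σ.support ≤ Fintype.card α := σ.support.card_le_univ
  have hexp : Fintype.card α + Multiset.card σ.partition.parts =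
      (σ.cycleType.sum + Multiset.card σ.cycleType) + 2 * (Fintype.card α - #σ.support) := by
    rw [parts_partition, Multiset.card_add, Multiset.card_replicate, sum_cycleType]
    omega
  rw [sign_of_cycleType, hexp, pow_add _ (_ + _), pow_mul, neg_one_sq, one_pow, mul_one,
    pow_add]

theorem partition_mem_oddDistincts_of_centralizer_le {σ : Perm α}
    (h : Subgroup.centralizer {σ} ≤ alternatingGroup α) :
    σ.partition ∈ Nat.Partition.oddDistincts (Fintype.card α) := by
  obtain ⟨hodd, hfixed, hcount⟩ := centralizer_le_alternating_iff.mp h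
  have hfixed' : Fintype.card α - #σ.support ≤ 1 := by rw [← sum_cycleType]; omega
  simp only [Nat.Partition.mem_oddDistincts_iff, parts_partition,
    Multiset.nodup_iff_count_le_one, Multiset.count_add, Multiset.count_replicate,
    Multiset.mem_add]
  refine ⟨fun i hi => ?_, fun i => ?_⟩
  · rcases hi with hi | hi
    · exact hodd i hi
    · rw [Multiset.eq_of_mem_replicate hi]; exact odd_one
  · split_ifs with h1
    · subst h1
      rw [Multiset.count_eq_zero_of_notMem fun h => by
        have := two_le_of_mem_cycleType h; omega]
      omega
    · simpa using hcount i

open Classical in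
theorem card_filter_alternatingGroup_partition_le [Nontrivial α]
    (p : (Fintype.card α).Partition) :
    #{a : ConjClasses (alternatingGroup α) |
        partitionOfConjClass (ConjClasses.map (alternatingGroup α).subtype a) = p} ≤
      (if Even (Fintype.card α + Multiset.card p.parts) then 1 else 0) +
        (if p ∈ Nat.Partition.oddDistincts _ then 1 else 0) := by
  set F : Finset (ConjClasses (alternatingGroup α)) := {a |
    partitionOfConjClass (ConjClasses.map (alternatingGroup α).subtype a) = p}
  have mem_F {x : alternatingGroup α} :
      ConjClasses.mk x ∈ F ↔ (x : Perm α).partition = p := by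
    simp only [F, mem_filter, mem_univ, true_and]
    rfl
  rcases F.eq_empty_or_nonempty with hF | ⟨a, ha⟩
  · simp [hF]
  obtain ⟨x, rfl⟩ := ConjClasses.mk_surjective a
  have hx : (x : Perm α).partition = p := mem_F.mp ha
  have heven : Even (Fintype.card α + Multiset.card p.parts) := by
    have := mem_alternatingGroup.mp x.2
    rwa [sign_eq_neg_one_pow_partition, hx, neg_one_pow_eq_one_iff_even (by decide)] at this
  have isConj_of_mem (y z : alternatingGroup α) (hy : ConjClasses.mk y ∈ F)
      (hz : ConjClasses.mk z ∈ F) : IsConj (y : Perm α) z :=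
    partition_eq_of_isConj.mpr ((mem_F.mp hy).trans (mem_F.mp hz).symm)
  rw [if_pos heven]
  split_ifs with hD
  · exact Subgroup.card_le_two_of_forall_isConj alternatingGroup.index_eq_two isConj_of_mem
  · refine Subgroup.card_le_one_of_forall_isConj alternatingGroup.index_eq_two isConj_of_mem
      fun y hy hle => hD ?_
    rw [← mem_F.mp hy]
    exact partition_mem_oddDistincts_of_centralizer_le hle

theorem nat_card_conjClasses_alternatingGroup_lt (hα : 4 ≤ Fintype.card α) :
    Nat.card (ConjClasses (alternatingGroup α)) < Nat.card (ConjClasses (Perm α)) := by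
  classical
  have : Nontrivial α := Fintype.one_lt_card_iff_nontrivial.mp (by omega)
  set n := Fintype.card α
  calc Nat.card (ConjClasses (alternatingGroup α))
      = ∑ p : n.Partition, #{a : ConjClasses (alternatingGroup α) |
          partitionOfConjClass (ConjClasses.map (alternatingGroup α).subtype a) = p} := by
        rw [Nat.card_eq_fintype_card, ← card_univ]
        exact card_eq_sum_card_fiberwise fun _ _ => mem_univ _
    _ ≤ ∑ p : n.Partition, ((if Even (n + Multiset.card p.parts) then 1 else 0) +
          (if p ∈ Nat.Partition.oddDistincts n then 1 else 0)) :=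
        sum_le_sum fun p _ => card_filter_alternatingGroup_partition_le p
    _ = #{p : n.Partition | Even (n + Multiset.card p.parts)} +
          #(Nat.Partition.oddDistincts n) := by
        rw [sum_add_distrib, sum_boole, sum_boole, filter_mem_eq_inter, univ_inter]
        rfl
    _ < #{p : n.Partition | Even (n + Multiset.card p.parts)} +
          #{p : n.Partition | ¬ Even (n + Multiset.card p.parts)} := by
        simp only [Nat.not_even_iff_odd]
        exact Nat.add_lt_add_left (Nat.Partition.card_oddDistincts_lt hα) _
    _ = Nat.card (ConjClasses (Perm α)) := by
        rw [card_filter_add_card_filter_not, nat_card_conjClasses_eq_card_partition, card_univ]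

end Equiv.Perm

/-- Corollary 2.9: for `m ≥ 4`, `k(A_m) < k(S_m)`. -/
theorem stmt_3 (m : ℕ) (hm : 4 ≤ m) :
    Nat.card (ConjClasses (alternatingGroup (Fin m))) <
      Nat.card (ConjClasses (Equiv.Perm (Fin m))) := by
  exact Equiv.Perm.nat_card_conjClasses_alternatingGroup_lt (by simpa using hm)
end

section
/- Let λ be a partition of a natural number N, with λ'_i = #{j : λ_j ≥ i} the parts of the dual partition and m_i(λ) the number of parts of λ equal to i. Then for every real number q ≥ 2: q^{Σ_i (λ'_i)²} · Π_{i ≥ 1} Π_{j=1}^{m_i(λ)} (1 − q^{−j}) ≥ q^N · (1 − 1/q). -/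
/-!
Write `ℓ = λ'_1` for the number of parts. Since `Σ λ'_i = N` and `(λ'_i)² ≥ λ'_i`, the exponent
`Σ (λ'_i)²` is at least `N + ℓ² - ℓ ≥ N + ℓ - 1`, while each factor `1 - q^{-j}` is at least
`1 - q⁻¹` and there are `Σ m_i = ℓ` of them. Hence the left side is at least
`q^{N + ℓ - 1} (1 - q⁻¹)^ℓ = q^N (1 - q⁻¹) (q - 1)^{ℓ - 1} ≥ q^N (1 - q⁻¹)`.
-/

theorem Multiset.sum_Icc_card_filter_le {n : ℕ} {s : Multiset ℕ} (hs : ∀ j ∈ s, j ≤ n) :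
    ∑ i ∈ Finset.Icc 1 n, Multiset.card (s.filter fun j => i ≤ j) = s.sum := by
  induction s using Multiset.induction with
  | empty => simp
  | cons p t ih =>
    have hp : p ≤ n := hs p (Multiset.mem_cons_self p t)
    have hIcc : {i ∈ Finset.Icc 1 n | i ≤ p} = Finset.Icc 1 p := by
      ext i; simp only [Finset.mem_filter, Finset.mem_Icc]; omega
    simp only [Multiset.filter_cons, apply_ite Multiset.card, Multiset.card_add,
      Multiset.card_singleton, Multiset.card_zero, Finset.sum_add_distrib, Finset.sum_boole,
      hIcc, Nat.card_Icc, Nat.add_sub_cancel, Nat.cast_id, Multiset.sum_cons,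
      ih fun j hj => hs j (Multiset.mem_cons_of_mem hj)]

theorem Finset.sum_add_le_sum_sq_add_one {ι : Type*} {s : Finset ι} {a : ι} (ha : a ∈ s)
    (c : ι → ℕ) : ∑ i ∈ s, c i + c a ≤ ∑ i ∈ s, c i ^ 2 + 1 := by
  classical
  rw [← Finset.add_sum_erase s c ha, ← Finset.add_sum_erase s (c · ^ 2) ha]
  have hrest : ∑ i ∈ s.erase a, c i ≤ ∑ i ∈ s.erase a, c i ^ 2 :=
    Finset.sum_le_sum fun i _ => Nat.le_self_pow two_ne_zero (c i)
  nlinarith [sq_nonneg ((c a : ℤ) - 1)]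

theorem one_sub_inv_pow_le_prod_one_sub_inv_pow {q : ℝ} (hq : 1 ≤ q) (m : ℕ) :
    (1 - q⁻¹) ^ m ≤ ∏ j ∈ Finset.Icc 1 m, (1 - (q ^ j)⁻¹) := by
  have hq0 : 0 < q := by linarith
  calc (1 - q⁻¹) ^ m = ∏ j ∈ Finset.Icc 1 m, (1 - q⁻¹) := by simp
    _ ≤ _ := Finset.prod_le_prod (fun _ _ => sub_nonneg.2 (inv_le_one_of_one_le₀ hq))
        fun j hj => sub_le_sub_left
          (inv_anti₀ hq0 (le_self_pow₀ hq (Nat.one_le_iff_ne_zero.1 (Finset.mem_Icc.1 hj).1))) 1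

theorem pow_mul_one_sub_inv_le {q : ℝ} (hq : 2 ≤ q) {n m k : ℕ} (hk : n + m ≤ k) :
    q ^ n * (1 - q⁻¹) ≤ q ^ k * (1 - q⁻¹) ^ (m + 1) := by
  have hq0 : 0 < q := by linarith
  have hr : 0 ≤ 1 - q⁻¹ := sub_nonneg.2 (inv_le_one_of_one_le₀ (by linarith))
  have hqr : q * (1 - q⁻¹) = q - 1 := by field_simp
  calc q ^ n * (1 - q⁻¹) ≤ q ^ n * (1 - q⁻¹) * (q - 1) ^ m :=
        le_mul_of_one_le_right (by positivity) (one_le_pow₀ (by linarith))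
    _ = q ^ (n + m) * (1 - q⁻¹) ^ (m + 1) := by rw [← hqr, mul_pow, pow_add, pow_succ]; ring
    _ ≤ q ^ k * (1 - q⁻¹) ^ (m + 1) :=
        mul_le_mul_of_nonneg_right (pow_le_pow_right₀ (by linarith) hk) (by positivity)

namespace Nat.Partition

variable {n : ℕ} (p : Nat.Partition n)

theorem sum_Icc_count_parts : ∑ i ∈ Finset.Icc 1 n, p.parts.count i = Multiset.card p.parts :=
  Multiset.sum_count_eq_card fun _ hi => Finset.mem_Icc.2 ⟨p.parts_pos hi, p.le_of_mem_parts hi⟩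

theorem sum_Icc_card_filter_le_parts :
    ∑ i ∈ Finset.Icc 1 n, Multiset.card (p.parts.filter fun j => i ≤ j) = n := by
  rw [Multiset.sum_Icc_card_filter_le fun _ => p.le_of_mem_parts, p.parts_sum]

theorem filter_one_le_parts : p.parts.filter (fun j => 1 ≤ j) = p.parts :=
  Multiset.filter_eq_self.2 fun _ => p.parts_pos

theorem card_parts_pos (hn : 0 < n) : 0 < Multiset.card p.parts :=
  Multiset.card_pos.2 fun h => hn.ne' (by rw [← p.parts_sum, h, Multiset.sum_zero])

end Nat.Partition

/-- Lemma 6.1: for a partition `λ` of `N` and real `q ≥ 2`,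
`q^{∑ (λ'_i)²} ∏_i (1/q)_{m_i(λ)} ≥ q^N (1 - 1/q)`, where `λ'_i` is the number of
parts of `λ` of size at least `i` and `m_i(λ)` is the number of parts of size `i`. -/
theorem stmt_16 (N : ℕ) (lam : Nat.Partition N) (q : ℝ) (hq : 2 ≤ q) :
    q ^ N * (1 - 1 / q) ≤
      q ^ (∑ i ∈ Finset.Icc 1 N, (Multiset.card (lam.parts.filter fun j => i ≤ j)) ^ 2) *
        ∏ i ∈ Finset.Icc 1 N,
          ∏ j ∈ Finset.Icc 1 (Multiset.count i lam.parts), (1 - (q ^ j)⁻¹) := by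
  rcases N.eq_zero_or_pos with rfl | hN
  · simpa using inv_nonneg.2 (by linarith : (0 : ℝ) ≤ q)
  obtain ⟨m, hm⟩ := Nat.exists_eq_add_one_of_ne_zero (lam.card_parts_pos hN).ne'
  have hexp := Finset.sum_add_le_sum_sq_add_one (a := 1) (Finset.mem_Icc.2 ⟨le_rfl, hN⟩)
    fun i => Multiset.card (lam.parts.filter fun j => i ≤ j)
  rw [lam.sum_Icc_card_filter_le_parts, lam.filter_one_le_parts, hm] at hexp
  have hr : 0 ≤ 1 - q⁻¹ := sub_nonneg.2 (inv_le_one_of_one_le₀ (by linarith))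
  have hprod : (1 - q⁻¹) ^ (m + 1) ≤ ∏ i ∈ Finset.Icc 1 N,
      ∏ j ∈ Finset.Icc 1 (Multiset.count i lam.parts), (1 - (q ^ j)⁻¹) := by
    rw [← hm, ← lam.sum_Icc_count_parts, ← Finset.prod_pow_eq_pow_sum]
    exact Finset.prod_le_prod (fun _ _ => pow_nonneg hr _) fun _ _ =>
      one_sub_inv_pow_le_prod_one_sub_inv_pow (by linarith) _
  rw [one_div]
  exact (pow_mul_one_sub_inv_le hq (by omega)).trans
    (mul_le_mul_of_nonneg_left hprod (by positivity))
end
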